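/- Every finite group of orientation preserving homeomorphisms of the circle is cyclic. -/

import Mathlib

noncomputable section

open MeasureTheory

/-- The circle `S¹ = ℝ/ℤ`. -/
abbrev 𝕊 : Type := AddCircle (1 : ℝ)

/-- `F : ℝ → ℝ` is a lift of the circle bijection `f` witnessing that `f` is an
orientation preserving homeomorphism of the circle: `F` is a strictly increasing
homeomorphism of `ℝ` (equivalently, continuous and strictly increasing) satisfying
`F (x + 1) = F x + 1`, and projecting to `f`. -/
def IsOPLift (f : Equiv.Perm 𝕊) (F : ℝ → ℝ) : Prop :=
  Continuous F ∧ StrictMono F ∧ (∀ x : ℝ, F (x + 1) = F x + 1) ∧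
    ∀ x : ℝ, f (x : 𝕊) = (F x : 𝕊)

/-- `f` is an orientation preserving homeomorphism of the circle. -/
def IsOPHomeo (f : Equiv.Perm 𝕊) : Prop := ∃ F : ℝ → ℝ, IsOPLift f F

/-- `F` is a lift witnessing that `f` is an orientation preserving `C¹` diffeomorphism
of the circle: an orientation preserving lift which is `C¹` with nowhere vanishing
derivative. -/
def IsC1Lift (f : Equiv.Perm 𝕊) (F : ℝ → ℝ) : Prop :=
  IsOPLift f F ∧ ContDiff ℝ 1 F ∧ ∀ x : ℝ, deriv F x ≠ 0

/-- `f` is an orientation preserving `C¹` diffeomorphism of the circle, i.e. an element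
of `Diff¹₊(S¹)`. -/
def IsC1Diffeo (f : Equiv.Perm 𝕊) : Prop := ∃ F : ℝ → ℝ, IsC1Lift f F

/-!
A finite group acting by orientation preserving homeomorphisms acts freely: if a lift `F` of an
element of finite order `n` fixes a point, then `F^[n]` is a lift of the identity with a fixed
point, hence `id`, and a strictly monotone map with a periodic point fixes it.
Normalise lifts by `F 0 ∈ [0, 1)` and let `g` be the non-identity element whose lift `F` has
the smallest value at `0`. For any `u`, with normalised lift value `b`, pick `k` with
`F^[k] 0 ≤ b < F^[k+1] 0`; the normalised lift value of `g⁻ᵏ u` is then smaller than `F 0`,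
so by minimality `u = gᵏ`, as in the proof that discrete subgroups of `ℝ` are cyclic.
-/

open Function Set

lemma exists_apply_le_lt_apply_succ {α : Type*} [LinearOrder α] {s : ℕ → α} {b : α} {n : ℕ}
    (h0 : s 0 ≤ b) (hn : b < s n) : ∃ k, s k ≤ b ∧ b < s (k + 1) := by
  induction n with
  | zero => exact absurd hn h0.not_gt
  | succ n ih => exact (lt_or_ge b (s n)).elim ih fun h => ⟨n, h, hn⟩

namespace IsOPLift

variable {f g u : Equiv.Perm 𝕊} {F H U : ℝ → ℝ}

lemma one : IsOPLift 1 id :=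
  ⟨continuous_id, strictMono_id, fun _ => rfl, fun _ => rfl⟩

lemma mul (hF : IsOPLift f F) (hH : IsOPLift g H) : IsOPLift (f * g) (F ∘ H) :=
  ⟨hF.1.comp hH.1, hF.2.1.comp hH.2.1, fun x => by simp [hH.2.2.1, hF.2.2.1],
    fun x => by simp [hH.2.2.2, hF.2.2.2]⟩

lemma pow (hF : IsOPLift f F) : ∀ n : ℕ, IsOPLift (f ^ n) F^[n]
  | 0 => one
  | n + 1 => by
      rw [pow_succ, iterate_succ]
      exact (hF.pow n).mul hF

lemma sub_intCast (hF : IsOPLift f F) (m : ℤ) : IsOPLift f (fun x => F x - m) := by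
  refine ⟨hF.1.sub continuous_const, fun _ _ hab => sub_lt_sub_right (hF.2.1 hab) _,
    fun x => by simp only [hF.2.2.1]; ring, fun x => ?_⟩
  rw [hF.2.2.2, QuotientAddGroup.mk_sub, eq_sub_iff_add_eq, add_eq_left]
  exact (AddCircle.coe_eq_zero_iff 1).2 ⟨m, by simp⟩

lemma coe_apply_eq (hF : IsOPLift f F) (hH : IsOPLift f H) (x : ℝ) :
    (F x : 𝕊) = H x := by
  rw [← hF.2.2.2, hH.2.2.2]

lemma eq_id_of_one {x : ℝ} (hF : IsOPLift 1 F) (hx : F x = x) : F = id :=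
  (AddCircle.isCoveringMap_coe (1 : ℝ)).eq_of_comp_eq hF.1 continuous_id
    (funext (hF.coe_apply_eq one)) x hx

lemma eq_one_of_apply_eq_self {x : ℝ} (hF : IsOPLift f F) (hf : IsOfFinOrder f) (hx : F x = x) :
    f = 1 := by
  obtain ⟨n, hn, hfn⟩ := hf.exists_pow_eq_one
  have hFn : F^[n] = id := (hfn ▸ hF.pow n).eq_id_of_one (iterate_fixed hx n)
  have hFid (y : ℝ) : F y = y :=
    ((Function.Commute.id_right (f := F)).iterate_pos_eq_iff_map_eq hF.2.1.monotone
      strictMono_id hn).1 (by simp [hFn])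
  ext1 y
  induction y using QuotientAddGroup.induction_on with
  | H y => simp [hF.2.2.2, hFid]

lemma one_le_iterate_apply_zero {n : ℕ} (hF : IsOPLift f F) (hfn : f ^ n = 1) (hn : 0 < n)
    (h0 : 0 < F 0) : 1 ≤ F^[n] 0 := by
  obtain ⟨m, hm⟩ := (AddCircle.coe_eq_zero_iff (1 : ℝ)).1 ((hfn ▸ hF.pow n).coe_apply_eq one 0)
  have hpos : 0 < F^[n] 0 := hF.2.1.strictMono_iterate_of_lt_map h0 hn
  rw [← hm] at hpos ⊢
  simp only [zsmul_eq_mul, mul_one, Int.cast_pos] at hpos ⊢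
  exact_mod_cast hpos

/-- If `F 0 ≤ H 0`, then `F^[k] (H 0)` would be a lift of `u 0` strictly between `U 0` and
`U 0 + 1`. -/
lemma apply_zero_lt_of_mem_Ico {k : ℕ}
    (hF : IsOPLift f F) (hU : IsOPLift u U) (hH : IsOPLift ((f ^ k)⁻¹ * u) H)
    (hH0 : H 0 ∈ Ico (0 : ℝ) 1) (hU0 : U 0 ∈ Ico (F^[k] 0) (F^[k + 1] 0)) : H 0 < F 0 := by
  by_contra! hle
  have hlift : IsOPLift u (F^[k] ∘ H) := by simpa using (hF.pow k).mul hH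
  have hlo : U 0 < F^[k] (H 0) := by
    refine hU0.2.trans_le ?_
    rw [iterate_succ_apply]
    exact (hF.2.1.iterate k).monotone hle
  have hhi : F^[k] (H 0) < U 0 + 1 := calc
    F^[k] (H 0) < F^[k] (0 + 1) := (hF.2.1.iterate k) (by simpa using hH0.2)
    _ = F^[k] 0 + 1 := (hF.pow k).2.2.1 0
    _ ≤ U 0 + 1 := by linarith [hU0.1]
  have heq : F^[k] (H 0) = U 0 :=
    (AddCircle.coe_eq_coe_iff_of_mem_Ico ⟨hlo.le, hhi⟩ ⟨le_rfl, lt_add_one _⟩).1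
      (hlift.coe_apply_eq hU 0)
  exact hlo.ne' heq

end IsOPLift

lemma IsOPHomeo.exists_lift_apply_zero_mem_Ico {f : Equiv.Perm 𝕊} (hf : IsOPHomeo f) :
    ∃ F, IsOPLift f F ∧ F 0 ∈ Ico (0 : ℝ) 1 := by
  obtain ⟨F, hF⟩ := hf
  exact ⟨_, hF.sub_intCast ⌊F 0⌋, Int.fract_nonneg (F 0), Int.fract_lt_one (F 0)⟩

/-- Every finite group of orientation preserving homeomorphisms of the
circle is cyclic. -/
theorem finite_orientation_preserving_group_is_cyclic
    (G : Subgroup (Equiv.Perm 𝕊)) [Finite G]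
    (hop : ∀ f ∈ G, IsOPHomeo f) :
    IsCyclic G := by
  rcases subsingleton_or_nontrivial G with _ | _
  · exact isCyclic_of_subsingleton
  choose φ hφ hφ0 using fun u : G => (hop u u.2).exists_lift_apply_zero_mem_Ico
  have hpos {u : G} (hu : u ≠ 1) : 0 < φ u 0 := (hφ0 u).1.lt_of_ne' fun h => hu <|
    Subtype.ext <| (hφ u).eq_one_of_apply_eq_self
      (Submonoid.isOfFinOrder_coe.2 (isOfFinOrder_of_finite u)) h
  obtain ⟨g, hg1, hg⟩ := Set.exists_min_image {u : G | u ≠ 1} (fun u => φ u 0) (Set.toFinite _)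
    (exists_ne 1)
  have hgd : 1 ≤ (φ g)^[orderOf g] 0 := (hφ g).one_le_iterate_apply_zero
    (by exact_mod_cast pow_orderOf_eq_one g) (orderOf_pos g) (hpos hg1)
  refine ⟨g, fun u => ?_⟩
  obtain ⟨k, hk⟩ := exists_apply_le_lt_apply_succ (s := fun j => (φ g)^[j] 0) (hφ0 u).1
    ((hφ0 u).2.trans_le hgd)
  have hrem : (g ^ k)⁻¹ * u = 1 := by
    by_contra hne
    refine (hg _ hne).not_gt ((hφ g).apply_zero_lt_of_mem_Ico (hφ u) ?_ (hφ0 _) hk)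
    simpa using hφ ((g ^ k)⁻¹ * u)
  exact ⟨k, by simpa using inv_mul_eq_one.1 hrem⟩
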